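/- arXiv:2503.10032 — 4 statements merged into one kernel-verified Lean document; each statement's English description precedes it below -/
import Mathlib

section
/- Let K be a real m×n matrix whose Gram matrix KᵀK is invertible, and set K⁺ := (KᵀK)⁻¹Kᵀ. Let B_Π ∈ ℝ^{m×p}, B_Δ ∈ ℝ^{m×q}, A_Π ∈ ℝ^{p'×n}, A_Δ ∈ ℝ^{q'×n}, and f ∈ ℝ^m. Define D_{ΠΠ} := −A_Π K⁺ B_Π, D_{ΠΔ} := −A_Π K⁺ B_Δ, and d_Π := −A_Π K⁺ f. Then for every c ∈ ℝ^n, μ_Π ∈ ℝ^p, μ_Δ ∈ ℝ^q, the triple satisfies (i) Kc + B_Π μ_Π + B_Δ μ_Δ = f, (ii) A_Π c = 0, (iii) A_Δ c = 0, if and only if it satisfies (i), (ii′) D_{ΠΠ} μ_Π + D_{ΠΔ} μ_Δ = d_Π, and (iii). (This is the elimination of the coarse flux block A_Π after partitioning the interface variables into coarse variables μ_Π and non-coarse variables μ_Δ.) -/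
open Matrix

/-- Elimination of the coarse flux block `A_Π` after partitioning the interface
variables into coarse variables `μ_Π` and non-coarse variables `μ_Δ`.
With `K⁺ = (KᵀK)⁻¹Kᵀ`, `D_{ΠΠ} = -A_Π K⁺ B_Π`, `D_{ΠΔ} = -A_Π K⁺ B_Δ`,
`d_Π = -A_Π K⁺ f`, the triple `(c, μ_Π, μ_Δ)` satisfies
(i) `Kc + B_Π μ_Π + B_Δ μ_Δ = f`, (ii) `A_Π c = 0`, (iii) `A_Δ c = 0`
iff it satisfies (i), (ii′) `D_{ΠΠ} μ_Π + D_{ΠΔ} μ_Δ = d_Π`, and (iii). -/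
theorem ddelm_coarse_flux_elimination {m n p q p' q' : ℕ}
    (K : Matrix (Fin m) (Fin n) ℝ)
    (BPi : Matrix (Fin m) (Fin p) ℝ) (BDe : Matrix (Fin m) (Fin q) ℝ)
    (APi : Matrix (Fin p') (Fin n) ℝ) (ADe : Matrix (Fin q') (Fin n) ℝ)
    (f : Fin m → ℝ)
    (hK : IsUnit (Kᵀ * K).det)
    (c : Fin n → ℝ) (muPi : Fin p → ℝ) (muDe : Fin q → ℝ) :
    (K *ᵥ c + BPi *ᵥ muPi + BDe *ᵥ muDe = f ∧ APi *ᵥ c = 0 ∧ ADe *ᵥ c = 0) ↔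
      (K *ᵥ c + BPi *ᵥ muPi + BDe *ᵥ muDe = f ∧
        (-(APi * ((Kᵀ * K)⁻¹ * Kᵀ) * BPi)) *ᵥ muPi
            + (-(APi * ((Kᵀ * K)⁻¹ * Kᵀ) * BDe)) *ᵥ muDe
          = -((APi * ((Kᵀ * K)⁻¹ * Kᵀ)) *ᵥ f) ∧
        ADe *ᵥ c = 0) := by
  constructor <;> rintro ⟨h1, h2, h3⟩ <;> refine ⟨h1, ?_, h3⟩ <;>
  · have hc : c = ((Kᵀ * K)⁻¹ * Kᵀ) *ᵥ (f - BPi *ᵥ muPi - BDe *ᵥ muDe) := by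
      have : K *ᵥ c = f - BPi *ᵥ muPi - BDe *ᵥ muDe := by
        rw [← h1]; abel
      rw [← this, mulVec_mulVec, Matrix.mul_assoc, ← mulVec_mulVec,
        mulVec_mulVec, nonsing_inv_mul _ hK, one_mulVec]
    have key : APi *ᵥ c =
        (APi * ((Kᵀ * K)⁻¹ * Kᵀ)) *ᵥ f
          - (APi * ((Kᵀ * K)⁻¹ * Kᵀ) * BPi) *ᵥ muPi
          - (APi * ((Kᵀ * K)⁻¹ * Kᵀ) * BDe) *ᵥ muDe := by
      rw [hc, mulVec_mulVec, mulVec_sub, mulVec_sub, mulVec_mulVec, mulVec_mulVec]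
    first
    | (rw [key] at h2
       rw [neg_mulVec, neg_mulVec]
       linear_combination h2)
    | (rw [key]
       rw [neg_mulVec, neg_mulVec] at h2
       linear_combination h2)
end

section
/- Let K be a real m×n matrix whose Gram matrix KᵀK is invertible, and set K⁺ := (KᵀK)⁻¹Kᵀ. Let B ∈ ℝ^{m×p}, D ∈ ℝ^{r×p}, f ∈ ℝ^m, d ∈ ℝ^r, and suppose the reduced matrix S := BᵀB + DᵀD − Bᵀ K K⁺ B is invertible. Then the functional J(c, μ) = ‖Kc + Bμ − f‖² + ‖Dμ − d‖² has a unique minimizer over ℝ^n × ℝ^p, given by μ = S⁻¹((Bᵀ − Bᵀ K K⁺) f + Dᵀ d) and c = K⁺(f − Bμ). -/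
open Matrix

/-- The least-squares objective `J(c, μ) = ‖Kc + Bμ − f‖² + ‖Dμ − d‖²`
(squared Euclidean norms written via dot products). -/
def ddelmObjective {m n p r : ℕ}
    (K : Matrix (Fin m) (Fin n) ℝ) (B : Matrix (Fin m) (Fin p) ℝ)
    (D : Matrix (Fin r) (Fin p) ℝ) (f : Fin m → ℝ) (d : Fin r → ℝ)
    (c : Fin n → ℝ) (μ : Fin p → ℝ) : ℝ :=
  (K *ᵥ c + B *ᵥ μ - f) ⬝ᵥ (K *ᵥ c + B *ᵥ μ - f)
    + (D *ᵥ μ - d) ⬝ᵥ (D *ᵥ μ - d)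

private lemma mulVec_dot_left {m n : ℕ} (M : Matrix (Fin m) (Fin n) ℝ)
    (x : Fin n → ℝ) (y : Fin m → ℝ) : (M *ᵥ x) ⬝ᵥ y = x ⬝ᵥ (Mᵀ *ᵥ y) := by
  rw [dotProduct_comm, dotProduct_mulVec, mulVec_transpose, dotProduct_comm]

private lemma dot_self_nonneg {n : ℕ} (v : Fin n → ℝ) : 0 ≤ v ⬝ᵥ v :=
  Finset.sum_nonneg fun i _ => mul_self_nonneg _

/-- If `KᵀK` is invertible and the reduced matrix
`S = BᵀB + DᵀD − BᵀKK⁺B` is invertible, then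
`J(c, μ) = ‖Kc + Bμ − f‖² + ‖Dμ − d‖²` has a unique minimizer, given by
`μ = S⁻¹((Bᵀ − BᵀKK⁺) f + Dᵀ d)` and `c = K⁺(f − Bμ)`, with `K⁺ = (KᵀK)⁻¹Kᵀ`. -/
theorem ddelm_unique_minimizer {m n p r : ℕ}
    (K : Matrix (Fin m) (Fin n) ℝ) (B : Matrix (Fin m) (Fin p) ℝ)
    (D : Matrix (Fin r) (Fin p) ℝ) (f : Fin m → ℝ) (d : Fin r → ℝ)
    (hK : IsUnit (Kᵀ * K).det)
    (hS : IsUnit (Bᵀ * B + Dᵀ * D - Bᵀ * K * ((Kᵀ * K)⁻¹ * Kᵀ) * B).det)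
    (μ₀ : Fin p → ℝ) (c₀ : Fin n → ℝ)
    (hμ₀ : μ₀ = (Bᵀ * B + Dᵀ * D - Bᵀ * K * ((Kᵀ * K)⁻¹ * Kᵀ) * B)⁻¹ *ᵥ
        ((Bᵀ - Bᵀ * K * ((Kᵀ * K)⁻¹ * Kᵀ)) *ᵥ f + Dᵀ *ᵥ d))
    (hc₀ : c₀ = ((Kᵀ * K)⁻¹ * Kᵀ) *ᵥ (f - B *ᵥ μ₀)) :
    (∀ (c' : Fin n → ℝ) (μ' : Fin p → ℝ),
        ddelmObjective K B D f d c₀ μ₀ ≤ ddelmObjective K B D f d c' μ') ∧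
      (∀ (c : Fin n → ℝ) (μ : Fin p → ℝ),
        (∀ (c' : Fin n → ℝ) (μ' : Fin p → ℝ),
            ddelmObjective K B D f d c μ ≤ ddelmObjective K B D f d c' μ') →
          c = c₀ ∧ μ = μ₀) := by
  set Kp : Matrix (Fin n) (Fin m) ℝ := (Kᵀ * K)⁻¹ * Kᵀ with hKp
  set S : Matrix (Fin p) (Fin p) ℝ := Bᵀ * B + Dᵀ * D - Bᵀ * K * Kp * B with hSdef
  have hinv : (Kᵀ * K) * (Kᵀ * K)⁻¹ = 1 := Matrix.mul_nonsing_inv _ hK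
  have hinv' : (Kᵀ * K)⁻¹ * (Kᵀ * K) = 1 := Matrix.nonsing_inv_mul _ hK
  have hKKp : Kᵀ * K * Kp = Kᵀ := by
    rw [hKp, ← Matrix.mul_assoc, hinv, Matrix.one_mul]
  -- residuals
  set r₁ : Fin m → ℝ := K *ᵥ c₀ + B *ᵥ μ₀ - f with hr₁
  set r₂ : Fin r → ℝ := D *ᵥ μ₀ - d with hr₂
  -- first normal equation
  have hKc₀ : Kᵀ *ᵥ (K *ᵥ c₀) = Kᵀ *ᵥ (f - B *ᵥ μ₀) := by
    rw [hc₀, mulVec_mulVec, mulVec_mulVec, ← Matrix.mul_assoc, hinv, Matrix.one_mul]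
  have h1 : Kᵀ *ᵥ r₁ = 0 := by
    rw [hr₁]
    have : Kᵀ *ᵥ (K *ᵥ c₀ + B *ᵥ μ₀ - f)
        = Kᵀ *ᵥ (K *ᵥ c₀) + Kᵀ *ᵥ (B *ᵥ μ₀) - Kᵀ *ᵥ f := by
      rw [Matrix.mulVec_sub, Matrix.mulVec_add]
    rw [this, hKc₀, Matrix.mulVec_sub]
    abel
  -- second normal equation
  have hSμ : S *ᵥ μ₀ = (Bᵀ - Bᵀ * K * Kp) *ᵥ f + Dᵀ *ᵥ d := by
    rw [hμ₀, mulVec_mulVec, Matrix.mul_nonsing_inv _ hS, one_mulVec]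
  have h2 : Bᵀ *ᵥ r₁ + Dᵀ *ᵥ r₂ = 0 := by
    have e1 : Bᵀ *ᵥ (K *ᵥ c₀) = (Bᵀ * K * Kp) *ᵥ f - (Bᵀ * K * Kp * B) *ᵥ μ₀ := by
      rw [hc₀]
      simp only [Matrix.mulVec_sub, mulVec_mulVec, Matrix.mul_assoc]
    have eS : S *ᵥ μ₀ = (Bᵀ * B) *ᵥ μ₀ + (Dᵀ * D) *ᵥ μ₀ - (Bᵀ * K * Kp * B) *ᵥ μ₀ := by
      rw [hSdef, Matrix.sub_mulVec, Matrix.add_mulVec]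
    have eR : (Bᵀ - Bᵀ * K * Kp) *ᵥ f = Bᵀ *ᵥ f - (Bᵀ * K * Kp) *ᵥ f := by
      rw [Matrix.sub_mulVec]
    rw [hr₁, hr₂]
    have exp1 : Bᵀ *ᵥ (K *ᵥ c₀ + B *ᵥ μ₀ - f)
        = Bᵀ *ᵥ (K *ᵥ c₀) + (Bᵀ * B) *ᵥ μ₀ - Bᵀ *ᵥ f := by
      simp only [Matrix.mulVec_sub, Matrix.mulVec_add, mulVec_mulVec]
    have exp2 : Dᵀ *ᵥ (D *ᵥ μ₀ - d) = (Dᵀ * D) *ᵥ μ₀ - Dᵀ *ᵥ d := by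
      rw [Matrix.mulVec_sub, mulVec_mulVec]
    rw [exp1, exp2, e1]
    have := hSμ
    rw [eS, eR] at this
    linear_combination (norm := abel) this
  -- expansion identity
  have key : ∀ (c' : Fin n → ℝ) (μ' : Fin p → ℝ),
      ddelmObjective K B D f d c' μ' = ddelmObjective K B D f d c₀ μ₀
        + (K *ᵥ (c' - c₀) + B *ᵥ (μ' - μ₀)) ⬝ᵥ (K *ᵥ (c' - c₀) + B *ᵥ (μ' - μ₀))
        + (D *ᵥ (μ' - μ₀)) ⬝ᵥ (D *ᵥ (μ' - μ₀)) := by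
    intro c' μ'
    set u : Fin m → ℝ := K *ᵥ (c' - c₀) + B *ᵥ (μ' - μ₀) with hu
    set v : Fin r → ℝ := D *ᵥ (μ' - μ₀) with hv
    have ha : K *ᵥ c' + B *ᵥ μ' - f = r₁ + u := by
      rw [hu, hr₁, Matrix.mulVec_sub, Matrix.mulVec_sub]; abel
    have hb : D *ᵥ μ' - d = r₂ + v := by
      rw [hv, hr₂, Matrix.mulVec_sub]; abel
    have cross1 : u ⬝ᵥ r₁ = (μ' - μ₀) ⬝ᵥ (Bᵀ *ᵥ r₁) := by
      rw [hu, add_dotProduct, mulVec_dot_left, mulVec_dot_left, h1,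
        dotProduct_zero, zero_add]
    have cross : u ⬝ᵥ r₁ + v ⬝ᵥ r₂ = 0 := by
      rw [cross1, hv, mulVec_dot_left, ← dotProduct_add, h2, dotProduct_zero]
    have c1 : r₁ ⬝ᵥ u + r₂ ⬝ᵥ v = 0 := by
      rw [dotProduct_comm r₁ u, dotProduct_comm r₂ v]; exact cross
    unfold ddelmObjective
    rw [ha, hb, ← hr₁, ← hr₂]
    simp only [add_dotProduct, dotProduct_add]
    linear_combination cross + c1
  constructor
  · intro c' μ'
    rw [key c' μ']
    have := dot_self_nonneg (K *ᵥ (c' - c₀) + B *ᵥ (μ' - μ₀))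
    have := dot_self_nonneg (D *ᵥ (μ' - μ₀))
    linarith
  · intro c μ hmin
    have hle : ddelmObjective K B D f d c μ ≤ ddelmObjective K B D f d c₀ μ₀ :=
      hmin c₀ μ₀
    have heq := key c μ
    have hu0 : K *ᵥ (c - c₀) + B *ᵥ (μ - μ₀) = 0 := by
      have h1' := dot_self_nonneg (K *ᵥ (c - c₀) + B *ᵥ (μ - μ₀))
      have h2' := dot_self_nonneg (D *ᵥ (μ - μ₀))
      have : (K *ᵥ (c - c₀) + B *ᵥ (μ - μ₀)) ⬝ᵥ (K *ᵥ (c - c₀) + B *ᵥ (μ - μ₀)) = 0 := by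
        linarith
      exact dotProduct_self_eq_zero.mp this
    have hv0 : D *ᵥ (μ - μ₀) = 0 := by
      have h1' := dot_self_nonneg (K *ᵥ (c - c₀) + B *ᵥ (μ - μ₀))
      have h2' := dot_self_nonneg (D *ᵥ (μ - μ₀))
      have : (D *ᵥ (μ - μ₀)) ⬝ᵥ (D *ᵥ (μ - μ₀)) = 0 := by linarith
      exact dotProduct_self_eq_zero.mp this
    -- derive μ = μ₀
    have hBδμ : B *ᵥ (μ - μ₀) = -(K *ᵥ (c - c₀)) := by
      rw [eq_neg_iff_add_eq_zero, add_comm]; exact hu0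
    have hKpK : Kp * K = 1 := by rw [hKp, Matrix.mul_assoc, hinv']
    have hδc : Kp *ᵥ (B *ᵥ (μ - μ₀)) = -(c - c₀) := by
      rw [hBδμ, Matrix.mulVec_neg, mulVec_mulVec, hKpK, one_mulVec]
    have t1 : (Bᵀ * B) *ᵥ (μ - μ₀) = -((Bᵀ * K) *ᵥ (c - c₀)) := by
      rw [← mulVec_mulVec, hBδμ, Matrix.mulVec_neg, mulVec_mulVec]
    have t2 : (Dᵀ * D) *ᵥ (μ - μ₀) = 0 := by
      rw [← mulVec_mulVec, hv0, Matrix.mulVec_zero]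
    have t3 : (Bᵀ * K * Kp * B) *ᵥ (μ - μ₀) = -((Bᵀ * K) *ᵥ (c - c₀)) := by
      have : (Bᵀ * K * Kp * B) *ᵥ (μ - μ₀) = (Bᵀ * K) *ᵥ (Kp *ᵥ (B *ᵥ (μ - μ₀))) := by
        simp only [mulVec_mulVec, Matrix.mul_assoc]
      rw [this, hδc, Matrix.mulVec_neg]
    have hSδμ : S *ᵥ (μ - μ₀) = 0 := by
      rw [hSdef, Matrix.sub_mulVec, Matrix.add_mulVec, t1, t2, t3]
      abel
    have hμeq : μ - μ₀ = 0 := by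
      have h := congrArg (fun w => S⁻¹ *ᵥ w) hSδμ
      simpa [mulVec_mulVec, Matrix.nonsing_inv_mul _ hS, Matrix.mulVec_zero] using h
    have hμ : μ = μ₀ := sub_eq_zero.mp hμeq
    have hKδc : K *ᵥ (c - c₀) = 0 := by
      have : B *ᵥ (μ - μ₀) = 0 := by rw [hμeq, Matrix.mulVec_zero]
      rw [this, add_zero] at hu0
      exact hu0
    have hδc0 : c - c₀ = 0 := by
      have h : Kp *ᵥ (K *ᵥ (c - c₀)) = 0 := by rw [hKδc, Matrix.mulVec_zero]
      rwa [mulVec_mulVec, hKpK, one_mulVec] at h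

    exact ⟨sub_eq_zero.mp hδc0, hμ⟩
end

section
/- Let K be a real m×n matrix whose Gram matrix KᵀK is invertible, and set K⁺ := (KᵀK)⁻¹Kᵀ. Let B ∈ ℝ^{m×p}, D ∈ ℝ^{r×p}, P ∈ ℝ^{s×r}, f ∈ ℝ^m, d ∈ ℝ^r. Then a pair (c, μ) ∈ ℝ^n × ℝ^p minimizes the functional J_P(c, μ) = ‖Kc + Bμ − f‖² + ‖P(Dμ − d)‖² (Euclidean norms) over all (c′, μ′) if and only if c = K⁺(f − Bμ) and μ satisfies (BᵀB + Dᵀ Pᵀ P D − Bᵀ K K⁺ B) μ = (Bᵀ − Bᵀ K K⁺) f + Dᵀ Pᵀ P d. (This is the Neumann–Neumann accelerated system obtained by multiplying the reduced Schur-complement row Dμ = d on the left by the Neumann-to-Dirichlet matrix P.) -/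
open Matrix

/-- The Neumann–Neumann accelerated least-squares objective
`J_P(c, μ) = ‖Kc + Bμ − f‖² + ‖P(Dμ − d)‖²`
(squared Euclidean norms written via dot products). -/

lemma dp_move {k l : ℕ} (A : Matrix (Fin k) (Fin l) ℝ) (x : Fin l → ℝ) (y : Fin k → ℝ) :
    y ⬝ᵥ (A *ᵥ x) = (Aᵀ *ᵥ y) ⬝ᵥ x := by
  rw [dotProduct_mulVec, ← mulVec_transpose]

lemma dp_self_nonneg {k : ℕ} (x : Fin k → ℝ) : 0 ≤ x ⬝ᵥ x :=
  Finset.sum_nonneg fun i _ => mul_self_nonneg (x i)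

lemma quad_coeff_zero {a b : ℝ} (hb : 0 ≤ b) (h : ∀ t : ℝ, 0 ≤ a * t + b * t ^ 2) : a = 0 := by
  have h1 : (0:ℝ) < b + 1 := by linarith
  have h2 : (0:ℝ) < (b + 1) ^ 2 := by positivity
  have := h (-a / (b + 1))
  have key : a * (-a / (b + 1)) + b * (-a / (b + 1)) ^ 2 = -a ^ 2 / (b + 1) ^ 2 := by
    field_simp; ring
  rw [key, le_div_iff₀ h2, zero_mul] at this
  nlinarith [sq_nonneg a]

lemma sq_expand {k : ℕ} (a b : Fin k → ℝ) :
    (a + b) ⬝ᵥ (a + b) = a ⬝ᵥ a + 2 * (a ⬝ᵥ b) + b ⬝ᵥ b := by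
  simp [add_dotProduct, dotProduct_add, dotProduct_comm b a]; ring


def ddelmObjectiveNN {m n p r s : ℕ}
    (K : Matrix (Fin m) (Fin n) ℝ) (B : Matrix (Fin m) (Fin p) ℝ)
    (D : Matrix (Fin r) (Fin p) ℝ) (P : Matrix (Fin s) (Fin r) ℝ)
    (f : Fin m → ℝ) (d : Fin r → ℝ)
    (c : Fin n → ℝ) (μ : Fin p → ℝ) : ℝ :=
  (K *ᵥ c + B *ᵥ μ - f) ⬝ᵥ (K *ᵥ c + B *ᵥ μ - f)
    + (P *ᵥ (D *ᵥ μ - d)) ⬝ᵥ (P *ᵥ (D *ᵥ μ - d))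

lemma ddelm_expand {m n p r s : ℕ}
    (K : Matrix (Fin m) (Fin n) ℝ) (B : Matrix (Fin m) (Fin p) ℝ)
    (D : Matrix (Fin r) (Fin p) ℝ) (P : Matrix (Fin s) (Fin r) ℝ)
    (f : Fin m → ℝ) (d : Fin r → ℝ)
    (c : Fin n → ℝ) (μ : Fin p → ℝ) (x : Fin n → ℝ) (y : Fin p → ℝ) :
    ddelmObjectiveNN K B D P f d (c + x) (μ + y)
      = ddelmObjectiveNN K B D P f d c μ
        + 2 * ((Kᵀ *ᵥ (K *ᵥ c + B *ᵥ μ - f)) ⬝ᵥ x)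
        + 2 * ((Bᵀ *ᵥ (K *ᵥ c + B *ᵥ μ - f) + Dᵀ *ᵥ (Pᵀ *ᵥ (P *ᵥ (D *ᵥ μ - d)))) ⬝ᵥ y)
        + (K *ᵥ x + B *ᵥ y) ⬝ᵥ (K *ᵥ x + B *ᵥ y)
        + (P *ᵥ (D *ᵥ y)) ⬝ᵥ (P *ᵥ (D *ᵥ y)) := by
  set u := K *ᵥ c + B *ᵥ μ - f with hu
  set v := P *ᵥ (D *ᵥ μ - d) with hv
  set w := K *ᵥ x + B *ᵥ y with hw
  set z := P *ᵥ (D *ᵥ y) with hz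
  have h1 : K *ᵥ (c + x) + B *ᵥ (μ + y) - f = u + w := by
    simp only [mulVec_add, hu, hw]; abel
  have h2 : P *ᵥ (D *ᵥ (μ + y) - d) = v + z := by
    have : D *ᵥ (μ + y) - d = (D *ᵥ μ - d) + D *ᵥ y := by
      rw [mulVec_add]; abel
    rw [this, mulVec_add]
  have h3 : u ⬝ᵥ w = (Kᵀ *ᵥ u) ⬝ᵥ x + (Bᵀ *ᵥ u) ⬝ᵥ y := by
    rw [hw, dotProduct_add, dp_move, dp_move]
  have h4 : v ⬝ᵥ z = (Dᵀ *ᵥ (Pᵀ *ᵥ v)) ⬝ᵥ y := by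
    rw [hz, dp_move, dp_move]
  rw [ddelmObjectiveNN, h1, h2, sq_expand u w, sq_expand v z, h3, h4, ddelmObjectiveNN]
  simp only [add_dotProduct]
  ring


/-- `(c, μ)` minimizes `J_P(c, μ) = ‖Kc + Bμ − f‖² + ‖P(Dμ − d)‖²` iff
`c = K⁺(f − Bμ)` and `μ` solves the Neumann–Neumann accelerated system
`(BᵀB + DᵀPᵀPD − BᵀKK⁺B) μ = (Bᵀ − BᵀKK⁺) f + DᵀPᵀP d`, with `K⁺ = (KᵀK)⁻¹Kᵀ`. -/
theorem ddelm_neumann_neumann_normal_equation {m n p r s : ℕ}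
    (K : Matrix (Fin m) (Fin n) ℝ) (B : Matrix (Fin m) (Fin p) ℝ)
    (D : Matrix (Fin r) (Fin p) ℝ) (P : Matrix (Fin s) (Fin r) ℝ)
    (f : Fin m → ℝ) (d : Fin r → ℝ)
    (hK : IsUnit (Kᵀ * K).det)
    (c : Fin n → ℝ) (μ : Fin p → ℝ) :
    (∀ (c' : Fin n → ℝ) (μ' : Fin p → ℝ),
        ddelmObjectiveNN K B D P f d c μ ≤ ddelmObjectiveNN K B D P f d c' μ') ↔
      (c = ((Kᵀ * K)⁻¹ * Kᵀ) *ᵥ (f - B *ᵥ μ) ∧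
        (Bᵀ * B + Dᵀ * Pᵀ * P * D - Bᵀ * K * ((Kᵀ * K)⁻¹ * Kᵀ) * B) *ᵥ μ
          = (Bᵀ - Bᵀ * K * ((Kᵀ * K)⁻¹ * Kᵀ)) *ᵥ f + (Dᵀ * Pᵀ * P) *ᵥ d) := by
  have hGl : (Kᵀ * K)⁻¹ * (Kᵀ * K) = 1 := nonsing_inv_mul _ hK
  have hGr : (Kᵀ * K) * (Kᵀ * K)⁻¹ = 1 := mul_nonsing_inv _ hK
  set u := K *ᵥ c + B *ᵥ μ - f with hu
  set v := P *ᵥ (D *ᵥ μ - d) with hv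
  -- rewriting of the K-normal equation
  have e1 : Kᵀ *ᵥ u = (Kᵀ * K) *ᵥ c - Kᵀ *ᵥ (f - B *ᵥ μ) := by
    rw [hu]
    simp only [mulVec_add, mulVec_sub, mulVec_mulVec]
    abel
  -- the c-equation equivalence
  have hciff : Kᵀ *ᵥ u = 0 ↔ c = ((Kᵀ * K)⁻¹ * Kᵀ) *ᵥ (f - B *ᵥ μ) := by
    constructor
    · intro h
      have h' : (Kᵀ * K) *ᵥ c = Kᵀ *ᵥ (f - B *ᵥ μ) := by
        rw [e1, sub_eq_zero] at h; exact h
      calc c = ((Kᵀ * K)⁻¹ * (Kᵀ * K)) *ᵥ c := by rw [hGl, one_mulVec]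
        _ = (Kᵀ * K)⁻¹ *ᵥ ((Kᵀ * K) *ᵥ c) := by rw [mulVec_mulVec]
        _ = (Kᵀ * K)⁻¹ *ᵥ (Kᵀ *ᵥ (f - B *ᵥ μ)) := by rw [h']
        _ = ((Kᵀ * K)⁻¹ * Kᵀ) *ᵥ (f - B *ᵥ μ) := by rw [mulVec_mulVec]
    · intro h
      rw [e1, h, mulVec_mulVec, ← Matrix.mul_assoc, hGr, Matrix.one_mul, sub_self]
  -- the key algebraic identity for the μ-equation (with c substituted)
  have key : Bᵀ *ᵥ (K *ᵥ (((Kᵀ * K)⁻¹ * Kᵀ) *ᵥ (f - B *ᵥ μ)) + B *ᵥ μ - f)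
        + Dᵀ *ᵥ (Pᵀ *ᵥ (P *ᵥ (D *ᵥ μ - d)))
      = (Bᵀ * B + Dᵀ * Pᵀ * P * D - Bᵀ * K * ((Kᵀ * K)⁻¹ * Kᵀ) * B) *ᵥ μ
        - ((Bᵀ - Bᵀ * K * ((Kᵀ * K)⁻¹ * Kᵀ)) *ᵥ f + (Dᵀ * Pᵀ * P) *ᵥ d) := by
    simp only [mulVec_sub, mulVec_add, sub_mulVec, add_mulVec, mulVec_mulVec,
      Matrix.mul_assoc]
    abel
  constructor
  · intro hmin
    have hmin' : ∀ x y, 0 ≤ 2 * ((Kᵀ *ᵥ u) ⬝ᵥ x)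
        + 2 * ((Bᵀ *ᵥ u + Dᵀ *ᵥ (Pᵀ *ᵥ v)) ⬝ᵥ y)
        + (K *ᵥ x + B *ᵥ y) ⬝ᵥ (K *ᵥ x + B *ᵥ y)
        + (P *ᵥ (D *ᵥ y)) ⬝ᵥ (P *ᵥ (D *ᵥ y)) := by
      intro x y
      have h := hmin (c + x) (μ + y)
      rw [ddelm_expand] at h
      rw [hu, hv]
      linarith
    -- first normal equation
    have ne1 : Kᵀ *ᵥ u = 0 := by
      set w := Kᵀ *ᵥ u with hw
      have hq : ∀ t : ℝ, 0 ≤ (2 * (w ⬝ᵥ w)) * t + ((K *ᵥ w) ⬝ᵥ (K *ᵥ w)) * t ^ 2 := by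
        intro t
        have h := hmin' (t • w) 0
        simp only [mulVec_zero, add_zero, dotProduct_zero, mulVec_smul,
          smul_dotProduct, dotProduct_smul, smul_eq_mul, mul_zero] at h
        nlinarith [h]
      have := quad_coeff_zero (dp_self_nonneg _) hq
      have hww : w ⬝ᵥ w = 0 := by linarith
      exact dotProduct_self_eq_zero.mp hww
    -- second normal equation
    have ne2 : Bᵀ *ᵥ u + Dᵀ *ᵥ (Pᵀ *ᵥ v) = 0 := by
      set w := Bᵀ *ᵥ u + Dᵀ *ᵥ (Pᵀ *ᵥ v) with hw
      have hq : ∀ t : ℝ, 0 ≤ (2 * (w ⬝ᵥ w)) * t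
          + ((B *ᵥ w) ⬝ᵥ (B *ᵥ w) + (P *ᵥ (D *ᵥ w)) ⬝ᵥ (P *ᵥ (D *ᵥ w))) * t ^ 2 := by
        intro t
        have h := hmin' 0 (t • w)
        simp only [mulVec_zero, zero_add, dotProduct_zero, mulVec_smul,
          smul_dotProduct, dotProduct_smul, smul_eq_mul, mul_zero] at h
        nlinarith [h]
      have hb : 0 ≤ (B *ᵥ w) ⬝ᵥ (B *ᵥ w) + (P *ᵥ (D *ᵥ w)) ⬝ᵥ (P *ᵥ (D *ᵥ w)) :=
        add_nonneg (dp_self_nonneg _) (dp_self_nonneg _)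
      have := quad_coeff_zero hb hq
      have hww : w ⬝ᵥ w = 0 := by linarith
      exact dotProduct_self_eq_zero.mp hww
    have hc := hciff.mp ne1
    refine ⟨hc, ?_⟩
    have h2 := ne2
    rw [hu, hc] at h2
    rw [key, sub_eq_zero] at h2
    exact h2
  · rintro ⟨hc, hμ⟩
    have ne1 : Kᵀ *ᵥ u = 0 := hciff.mpr hc
    have ne2 : Bᵀ *ᵥ u + Dᵀ *ᵥ (Pᵀ *ᵥ v) = 0 := by
      rw [hu, hc, key, sub_eq_zero]
      exact hμ
    intro c' μ'
    have hc' : c' = c + (c' - c) := by abel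
    have hμ' : μ' = μ + (μ' - μ) := by abel
    rw [hc', hμ', ddelm_expand, ← hu, ← hv, ne1, ne2, zero_dotProduct, zero_dotProduct]
    have := dp_self_nonneg (K *ᵥ (c' - c) + B *ᵥ (μ' - μ))
    have := dp_self_nonneg (P *ᵥ (D *ᵥ (μ' - μ)))
    linarith
end

section
/- Let K be a real m×n matrix whose Gram matrix KᵀK is invertible, and set K⁺ := (KᵀK)⁻¹Kᵀ. Let B ∈ ℝ^{m×p}, D ∈ ℝ^{r×p}, and suppose S := BᵀB + DᵀD − Bᵀ K K⁺ B is invertible, so that K̃ := [[K, B], [0, D]] has invertible Gram matrix K̃ᵀK̃. Then for every φ ∈ ℝ^m, setting ν := S⁻¹(−Bᵀ (K⁺)ᵀ φ), the transpose of the pseudoinverse of K̃ applied to [φ; 0] satisfies K̃ (K̃ᵀK̃)⁻¹ [φ; 0] = [ (K⁺)ᵀ φ − K K⁺ B ν + B ν ; D ν ], i.e., its first block is (K⁺)ᵀφ + (I_m − KK⁺)Bν and its second block is Dν. -/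
open Matrix

/-- Application of the transpose of the pseudoinverse of the block matrix
`K̃ = [[K, B], [0, D]]` to a vector of the form `[φ; 0]` (here `φ ∈ ℝⁿ`,
matching the column blocks of `K̃`). With `K⁺ = (KᵀK)⁻¹Kᵀ`,
`S = BᵀB + DᵀD − BᵀKK⁺B` invertible, and `ν = S⁻¹(−Bᵀ(K⁺)ᵀφ)`, we have
`K̃(K̃ᵀK̃)⁻¹ [φ; 0] = [(K⁺)ᵀφ − KK⁺Bν + Bν ; Dν]`. -/
theorem ddelm_pseudoinverse_transpose_apply {m n p r : ℕ}
    (K : Matrix (Fin m) (Fin n) ℝ) (B : Matrix (Fin m) (Fin p) ℝ)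
    (D : Matrix (Fin r) (Fin p) ℝ)
    (hK : IsUnit (Kᵀ * K).det)
    (Kp : Matrix (Fin n) (Fin m) ℝ) (hKp : Kp = (Kᵀ * K)⁻¹ * Kᵀ)
    (S : Matrix (Fin p) (Fin p) ℝ)
    (hS : S = Bᵀ * B + Dᵀ * D - Bᵀ * K * Kp * B)
    (hSinv : IsUnit S.det)
    (Kt : Matrix (Fin m ⊕ Fin r) (Fin n ⊕ Fin p) ℝ)
    (hKt : Kt = Matrix.fromBlocks K B 0 D)
    (φ : Fin n → ℝ) (ν : Fin p → ℝ)
    (hν : ν = S⁻¹ *ᵥ (-(Bᵀ *ᵥ (Kpᵀ *ᵥ φ)))) :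
    (Kt * (Ktᵀ * Kt)⁻¹) *ᵥ Sum.elim φ 0
      = Sum.elim (Kpᵀ *ᵥ φ - (K * Kp * B) *ᵥ ν + B *ᵥ ν) (D *ᵥ ν) := by
  have hA : Invertible (Kᵀ * K) := invertibleOfIsUnitDet _ hK
  -- Gram matrix block form
  have hG : Ktᵀ * Kt = fromBlocks (Kᵀ * K) (Kᵀ * B) (Bᵀ * K) (Bᵀ * B + Dᵀ * D) := by
    rw [hKt, fromBlocks_transpose, fromBlocks_multiply]
    simp
  -- Schur complement identity
  have hSchur : (Bᵀ * B + Dᵀ * D) - (Bᵀ * K) * (Kᵀ * K)⁻¹ * (Kᵀ * B) = S := by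
    rw [hS, hKp]; simp only [Matrix.mul_assoc]
  -- Gram determinant is a unit
  have hGdet : IsUnit (Ktᵀ * Kt).det := by
    rw [hG, det_fromBlocks₁₁, invOf_eq_nonsing_inv, hSchur]
    exact hK.mul hSinv
  -- solution vector
  set x : Fin n → ℝ := (Kᵀ * K)⁻¹ *ᵥ (φ - (Kᵀ * B) *ᵥ ν) with hx
  have hAinv : (Kᵀ * K) * (Kᵀ * K)⁻¹ = 1 := mul_nonsing_inv _ hK
  have hKpT : Kpᵀ = K * (Kᵀ * K)⁻¹ := by
    rw [hKp, transpose_mul, transpose_nonsing_inv, transpose_mul, transpose_transpose]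
  have hSν : S *ᵥ ν = -(Bᵀ *ᵥ (Kpᵀ *ᵥ φ)) := by
    rw [hν, mulVec_mulVec, mul_nonsing_inv _ hSinv, one_mulVec]
  -- the two block equations
  have htop : (Kᵀ * K) *ᵥ x + (Kᵀ * B) *ᵥ ν = φ := by
    rw [hx, mulVec_mulVec, hAinv, one_mulVec, sub_add_cancel]
  have hbot : (Bᵀ * K) *ᵥ x + (Bᵀ * B + Dᵀ * D) *ᵥ ν = 0 := by
    rw [hx, mulVec_mulVec, mulVec_sub]
    have h1 : Bᵀ * K * (Kᵀ * K)⁻¹ = Bᵀ * Kpᵀ := by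
      rw [hKpT, Matrix.mul_assoc]
    have h2 : Bᵀ * K * (Kᵀ * K)⁻¹ * (Kᵀ * B) = Bᵀ * B + Dᵀ * D - S := by
      rw [← hSchur]; exact (sub_sub_cancel _ _).symm
    rw [show (Bᵀ * K * (Kᵀ * K)⁻¹) *ᵥ ((Kᵀ * B) *ᵥ ν)
          = (Bᵀ * K * (Kᵀ * K)⁻¹ * (Kᵀ * B)) *ᵥ ν from by
        rw [mulVec_mulVec, Matrix.mul_assoc] ,
      h2, h1, ← mulVec_mulVec, sub_mulVec, hSν]
    abel
  -- Gram matrix times (x, ν) = (φ, 0)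
  have hw : (Ktᵀ * Kt) *ᵥ Sum.elim x ν = Sum.elim φ 0 := by
    rw [hG, fromBlocks_mulVec]
    simp only [Sum.elim_comp_inl, Sum.elim_comp_inr]
    rw [htop, hbot]
  have hinvw : (Ktᵀ * Kt)⁻¹ *ᵥ Sum.elim φ 0 = Sum.elim x ν := by
    rw [← hw, mulVec_mulVec, nonsing_inv_mul _ hGdet, one_mulVec]
  -- final computation
  rw [← mulVec_mulVec, hinvw, hKt, fromBlocks_mulVec]
  simp only [Sum.elim_comp_inl, Sum.elim_comp_inr, Matrix.zero_mulVec, zero_add]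
  congr 1
  rw [hx, mulVec_mulVec, ← hKpT, mulVec_sub]
  congr 2
  rw [mulVec_mulVec]
  congr 1
  rw [hKpT, hKp]
  simp only [Matrix.mul_assoc]
end
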